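/- arXiv:2603.05762 — 2 statements merged into one kernel-verified Lean document; each statement's English description precedes it below -/
import Mathlib

section
/- Let h : [0,∞) → ℝ be twice continuously differentiable, γ₁, γ₂ > 0, and define ψ₁ = h' + γ₁h. If h(0) ≥ 0, ψ₁(0) ≥ 0, and ψ₁'(t) + γ₂ψ₁(t) ≥ 0 for all t ≥ 0, then h(t) ≥ 0 for all t ≥ 0. -/
/-! Multiplying by the integrating factor `exp (γ t)` turns `f' + γ f ≥ 0` into monotonicity of
`f · exp (γ t)`, so a function that starts nonnegative stays nonnegative. Applied first to
`ψ₁ = h' + γ₁ h` with rate `γ₂`, and then to `h` with rate `γ₁`, this gives `h ≥ 0`. -/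

open Set Real

theorem hasDerivAt_mul_exp_const_mul {f : ℝ → ℝ} {f' γ t : ℝ} (hf : HasDerivAt f f' t) :
    HasDerivAt (fun s => f s * exp (γ * s)) ((f' + γ * f t) * exp (γ * t)) t := by
  have hexp : HasDerivAt (fun s => exp (γ * s)) (exp (γ * t) * γ) t := by
    simpa using ((hasDerivAt_id t).const_mul γ).exp
  exact (hf.mul hexp).congr_deriv (by ring)

theorem monotoneOn_mul_exp_of_deriv_add_mul_nonneg {f f' : ℝ → ℝ} {γ a : ℝ}
    (hf : ∀ t ∈ Ici a, HasDerivAt f (f' t) t) (hineq : ∀ t ∈ Ici a, 0 ≤ f' t + γ * f t) :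
    MonotoneOn (fun t => f t * exp (γ * t)) (Ici a) := by
  have hderiv : ∀ t ∈ Ici a,
      HasDerivAt (fun s => f s * exp (γ * s)) ((f' t + γ * f t) * exp (γ * t)) t :=
    fun t ht => hasDerivAt_mul_exp_const_mul (hf t ht)
  refine monotoneOn_of_deriv_nonneg (convex_Ici a)
    (fun t ht => (hderiv t ht).continuousAt.continuousWithinAt)
    (fun t ht => (hderiv t (interior_subset ht)).differentiableAt.differentiableWithinAt)
    fun t ht => ?_
  rw [(hderiv t (interior_subset ht)).deriv]
  exact mul_nonneg (hineq t (interior_subset ht)) (exp_pos _).le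

theorem nonneg_of_deriv_add_mul_nonneg {f f' : ℝ → ℝ} {γ a : ℝ}
    (hf : ∀ t ∈ Ici a, HasDerivAt f (f' t) t) (ha : 0 ≤ f a)
    (hineq : ∀ t ∈ Ici a, 0 ≤ f' t + γ * f t) :
    ∀ t ∈ Ici a, 0 ≤ f t := by
  intro t ht
  have hmono := monotoneOn_mul_exp_of_deriv_add_mul_nonneg hf hineq self_mem_Ici ht ht
  have hstart : 0 ≤ f a * exp (γ * a) := mul_nonneg ha (exp_pos _).le
  exact nonneg_of_mul_nonneg_left (hstart.trans hmono) (exp_pos _)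

theorem hocbf_order_two_nonneg_general
    (h h' h'' : ℝ → ℝ) (γ₁ γ₂ : ℝ)
    (hd1 : ∀ t, HasDerivAt h (h' t) t)
    (hd2 : ∀ t, HasDerivAt h' (h'' t) t)
    (h0 : h 0 ≥ 0)
    (hψ0 : h' 0 + γ₁ * h 0 ≥ 0)
    (hψ2 : ∀ t ∈ Set.Ici (0 : ℝ),
      (h'' t + γ₁ * h' t) + γ₂ * (h' t + γ₁ * h t) ≥ 0) :
    ∀ t ∈ Set.Ici (0 : ℝ), h t ≥ 0 := by
  have hψ1 : ∀ t ∈ Ici (0 : ℝ), 0 ≤ h' t + γ₁ * h t :=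
    nonneg_of_deriv_add_mul_nonneg (fun t _ => (hd2 t).add ((hd1 t).const_mul γ₁)) hψ0 hψ2
  exact nonneg_of_deriv_add_mul_nonneg (fun t _ => hd1 t) h0 hψ1

/-- Second-order HOCBF invariance: with `ψ₁ = h' + γ₁ h`, if `h(0) ≥ 0`, `ψ₁(0) ≥ 0`,
and `ψ₁' + γ₂ ψ₁ ≥ 0` on `[0,∞)`, then `h ≥ 0` on `[0,∞)`. -/
theorem hocbf_order_two_nonneg
    (h h' h'' : ℝ → ℝ) (γ₁ γ₂ : ℝ) (hγ₁ : 0 < γ₁) (hγ₂ : 0 < γ₂)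
    (hd1 : ∀ t, HasDerivAt h (h' t) t)
    (hd2 : ∀ t, HasDerivAt h' (h'' t) t)
    (hcont : Continuous h'')
    (h0 : h 0 ≥ 0)
    (hψ0 : h' 0 + γ₁ * h 0 ≥ 0)
    (hψ2 : ∀ t ∈ Set.Ici (0 : ℝ),
      (h'' t + γ₁ * h' t) + γ₂ * (h' t + γ₁ * h t) ≥ 0) :
    ∀ t ∈ Set.Ici (0 : ℝ), h t ≥ 0 :=
  hocbf_order_two_nonneg_general h h' h'' γ₁ γ₂ hd1 hd2 h0 hψ0 hψ2
end

section
/- Consider two agents with r̈ = u_i − u_j, h(t) = ‖r(t)‖² − r_s², and the reciprocal assumption u_j = −u_i. If agent i chooses u_i such that 4⟨r, u_i⟩ ≥ −2‖v‖² − 2(γ₁+γ₂)⟨r,v⟩ − γ₁γ₂ h for all t, with h(0) ≥ 0 and ḣ(0) + γ₁ h(0) ≥ 0, then ‖r(t)‖ ≥ r_s for all t ≥ 0. -/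
open scoped RealInnerProductSpace

open Set

/-!
The barrier `h = ‖r‖² - r_s²` is an exponential control barrier function of relative degree two:
with `ψ = ḣ + γ₁ h`, the enforced constraint says exactly `ψ̇ + γ₂ ψ ≥ 0`, once reciprocity turns
`⟪r, u_i - u_j⟫` into `2⟪r, u_i⟫`. A first-order comparison argument (`e^{γt} f` is monotone when
`f' + γ f ≥ 0`) then gives `ψ ≥ 0` and, applied once more, `h ≥ 0`.
-/

theorem nonneg_of_hasDerivAt_add_mul_nonneg {f f' : ℝ → ℝ} {γ : ℝ}
    (hf : ∀ t ∈ Ici (0 : ℝ), HasDerivAt f (f' t) t)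
    (hineq : ∀ t ∈ Ici (0 : ℝ), 0 ≤ f' t + γ * f t) (h0 : 0 ≤ f 0) :
    ∀ t ∈ Ici (0 : ℝ), 0 ≤ f t := by
  set g : ℝ → ℝ := fun t => Real.exp (γ * t) * f t
  have hg : ∀ t ∈ Ici (0 : ℝ), HasDerivAt g (Real.exp (γ * t) * (f' t + γ * f t)) t := by
    intro t ht
    have hexp : HasDerivAt (fun s => Real.exp (γ * s)) (Real.exp (γ * t) * γ) t := by
      simpa using ((hasDerivAt_id t).const_mul γ).exp
    exact (hexp.mul (hf t ht)).congr_deriv (by ring)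
  have hmono : MonotoneOn g (Ici 0) :=
    monotoneOn_of_hasDerivWithinAt_nonneg (convex_Ici 0)
      (fun t ht => (hg t ht).continuousAt.continuousWithinAt)
      (fun t ht => (hg t (interior_subset ht)).hasDerivWithinAt)
      (fun t ht => mul_nonneg (Real.exp_pos _).le (hineq t (interior_subset ht)))
  intro t ht
  have hgt : 0 ≤ g t :=
    calc 0 ≤ f 0 := h0
      _ = g 0 := by simp [g]
      _ ≤ g t := hmono (mem_Ici.mpr le_rfl) ht (mem_Ici.mp ht)
  exact nonneg_of_mul_nonneg_right hgt (Real.exp_pos _)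

theorem nonneg_of_second_order_exponential_barrier {h h' ψ' : ℝ → ℝ} {γ₁ γ₂ : ℝ}
    (hh : ∀ t ∈ Ici (0 : ℝ), HasDerivAt h (h' t) t)
    (hψ : ∀ t ∈ Ici (0 : ℝ), HasDerivAt (fun s => h' s + γ₁ * h s) (ψ' t) t)
    (hineq : ∀ t ∈ Ici (0 : ℝ), 0 ≤ ψ' t + γ₂ * (h' t + γ₁ * h t))
    (h0 : 0 ≤ h 0) (hψ0 : 0 ≤ h' 0 + γ₁ * h 0) :
    ∀ t ∈ Ici (0 : ℝ), 0 ≤ h t :=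
  nonneg_of_hasDerivAt_add_mul_nonneg hh
    (nonneg_of_hasDerivAt_add_mul_nonneg hψ hineq hψ0) h0

theorem le_norm_of_collision_barrier {E : Type*} [NormedAddCommGroup E] [InnerProductSpace ℝ E]
    {r v a : ℝ → E} {rs γ₁ γ₂ : ℝ}
    (hr : ∀ t ∈ Ici (0 : ℝ), HasDerivAt r (v t) t)
    (hv : ∀ t ∈ Ici (0 : ℝ), HasDerivAt v (a t) t)
    (hineq : ∀ t ∈ Ici (0 : ℝ),
      -2 * ‖v t‖ ^ 2 - 2 * (γ₁ + γ₂) * ⟪r t, v t⟫ - γ₁ * γ₂ * (‖r t‖ ^ 2 - rs ^ 2)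
        ≤ 2 * ⟪r t, a t⟫)
    (h0 : 0 ≤ ‖r 0‖ ^ 2 - rs ^ 2) (hψ0 : 0 ≤ 2 * ⟪r 0, v 0⟫ + γ₁ * (‖r 0‖ ^ 2 - rs ^ 2)) :
    ∀ t ∈ Ici (0 : ℝ), rs ≤ ‖r t‖ := by
  have hh : ∀ t ∈ Ici (0 : ℝ), HasDerivAt (fun s => ‖r s‖ ^ 2 - rs ^ 2) (2 * ⟪r t, v t⟫) t :=
    fun t ht => ((hr t ht).norm_sq).sub_const _
  have hψ : ∀ t ∈ Ici (0 : ℝ), HasDerivAt (fun s => 2 * ⟪r s, v s⟫ + γ₁ * (‖r s‖ ^ 2 - rs ^ 2))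
      (2 * (⟪r t, a t⟫ + ‖v t‖ ^ 2) + γ₁ * (2 * ⟪r t, v t⟫)) t := by
    intro t ht
    have hrv := ((hr t ht).inner ℝ (hv t ht)).const_mul 2
    rw [real_inner_self_eq_norm_sq] at hrv
    exact hrv.add ((hh t ht).const_mul γ₁)
  have hbarrier := nonneg_of_second_order_exponential_barrier (γ₂ := γ₂) hh hψ
    (fun t ht => by linarith [hineq t ht]) h0 hψ0
  intro t ht
  have hsq : rs ^ 2 ≤ ‖r t‖ ^ 2 := sub_nonneg.mp (hbarrier t ht)
  calc rs ≤ |rs| := le_abs_self rs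
    _ ≤ |‖r t‖| := sq_le_sq.mp hsq
    _ = ‖r t‖ := abs_norm _

theorem reciprocal_hocbf_collision_avoidance_general
    (r v ui uj : ℝ → EuclideanSpace ℝ (Fin 3)) (rs γ₁ γ₂ : ℝ)
    (hr : ∀ t, HasDerivAt r (v t) t)
    (hv : ∀ t, HasDerivAt v (ui t - uj t) t)
    (hrecip : ∀ t, uj t = -ui t)
    (hconstraint : ∀ t ∈ Set.Ici (0 : ℝ),
      4 * ⟪r t, ui t⟫ ≥
        -2 * ‖v t‖ ^ 2 - 2 * (γ₁ + γ₂) * ⟪r t, v t⟫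
          - γ₁ * γ₂ * (‖r t‖ ^ 2 - rs ^ 2))
    (h0 : ‖r 0‖ ^ 2 - rs ^ 2 ≥ 0)
    (hψ1 : 2 * ⟪r 0, v 0⟫ + γ₁ * (‖r 0‖ ^ 2 - rs ^ 2) ≥ 0) :
    ∀ t ∈ Set.Ici (0 : ℝ), ‖r t‖ ≥ rs := by
  refine le_norm_of_collision_barrier (γ₂ := γ₂) (fun t _ => hr t) (fun t _ => hv t)
    (fun t ht => ?_) h0 hψ1
  have hreciprocal : ⟪r t, ui t - uj t⟫ = 2 * ⟪r t, ui t⟫ := by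
    rw [hrecip, sub_neg_eq_add, inner_add_right, two_mul]
  linarith [hconstraint t ht]

/-- Reciprocal avoidance: under `u_j = −u_i`, if agent `i` enforces
`4⟪r,u_i⟫ ≥ −2‖v‖² − 2(γ₁+γ₂)⟪r,v⟫ − γ₁γ₂ h` with `h(0) ≥ 0` and
`ḣ(0) + γ₁ h(0) ≥ 0`, then `‖r(t)‖ ≥ r_s` for all `t ≥ 0`. -/
theorem reciprocal_hocbf_collision_avoidance
    (r v ui uj : ℝ → EuclideanSpace ℝ (Fin 3)) (rs γ₁ γ₂ : ℝ)
    (hγ₁ : 0 < γ₁) (hγ₂ : 0 < γ₂)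
    (hr : ∀ t, HasDerivAt r (v t) t)
    (hv : ∀ t, HasDerivAt v (ui t - uj t) t)
    (hrecip : ∀ t, uj t = -ui t)
    (hcont : Continuous ui)
    (hconstraint : ∀ t ∈ Set.Ici (0 : ℝ),
      4 * ⟪r t, ui t⟫ ≥
        -2 * ‖v t‖ ^ 2 - 2 * (γ₁ + γ₂) * ⟪r t, v t⟫
          - γ₁ * γ₂ * (‖r t‖ ^ 2 - rs ^ 2))
    (h0 : ‖r 0‖ ^ 2 - rs ^ 2 ≥ 0)
    (hψ1 : 2 * ⟪r 0, v 0⟫ + γ₁ * (‖r 0‖ ^ 2 - rs ^ 2) ≥ 0) :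
    ∀ t ∈ Set.Ici (0 : ℝ), ‖r t‖ ≥ rs :=
  reciprocal_hocbf_collision_avoidance_general r v ui uj rs γ₁ γ₂ hr hv hrecip hconstraint h0 hψ1
end
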